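/- arXiv:q-bio/0701036 — 4 statements merged into one kernel-verified Lean document; each statement's English description precedes it below -/
import Mathlib

section
/- If a : ℕ → ℝ is an ℝ₊-rational sequence that is summable with sum s = ∑ₙ a n > 0, then the normalized sequence n ↦ a n / s is a discrete phase-type (PH) distribution on ℕ. -/
open Matrix

/-- `p` is a probability distribution on ℕ. -/
def IsProbDist (p : ℕ → ℝ) : Prop :=
  (∀ n, 0 ≤ p n) ∧ HasSum p 1

/-- `p` is a discrete phase-type (PH) distribution on ℕ. -/
def IsPH (p : ℕ → ℝ) : Prop :=
  IsProbDist p ∧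
  ∃ m : ℕ, 1 ≤ m ∧
    ∃ (α : Fin m → ℝ) (T : Matrix (Fin m) (Fin m) ℝ),
      (∀ i, 0 ≤ α i) ∧ (∑ i, α i) ≤ 1 ∧
      (∀ i j, 0 ≤ T i j) ∧ (∀ i, (∑ j, T i j) ≤ 1) ∧
      p 0 = 1 - ∑ i, α i ∧
      ∀ n, 1 ≤ n → p n = α ⬝ᵥ (T ^ (n - 1)).mulVec (fun i => 1 - ∑ j, T i j)

/-- `a` is an ℝ₊-rational sequence. -/
def IsRPlusRational (a : ℕ → ℝ) : Prop :=
  ∃ m : ℕ, 1 ≤ m ∧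
    ∃ (M : Matrix (Fin m) (Fin m) ℝ) (u v : Fin m → ℝ),
      (∀ i j, 0 ≤ M i j) ∧ (∀ i, 0 ≤ u i) ∧ (∀ i, 0 ≤ v i) ∧
      ∀ n, a n = u ⬝ᵥ (M ^ n).mulVec v

/-!
Write `a n = u ⬝ᵥ Mⁿ v` and let `w = ∑ₙ Mⁿ v`, taken coordinatewise. Every state `j` with
`(u ᵥ* M) j ≠ 0`, and every state reachable from it through `M`, has a convergent series `wⱼ`,
and there `w = v + M w`. Doob's `h`-transform `Tⱼₖ = Mⱼₖ wₖ / wⱼ` is therefore substochastic,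
its exit vector is `tⱼ = vⱼ / wⱼ`, and `wⱼ (Tⁿ t)ⱼ = (Mⁿ v)ⱼ`. With `αⱼ = (u ᵥ* M)ⱼ wⱼ / s` this
gives `a (n + 1) / s = α ⬝ᵥ Tⁿ t`, and `∑ α = (s - a 0) / s`.
-/

variable {ι : Type*}

section Series

variable [Fintype ι] {F : ℕ → ι → ℝ} {c : ι → ℝ}

lemma summable_mul_apply_of_summable_dotProduct (hF : ∀ n, 0 ≤ F n) (hc : 0 ≤ c)
    (h : Summable fun n => c ⬝ᵥ F n) (k : ι) : Summable fun n => c k * F n k :=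
  h.of_nonneg_of_le (fun n => mul_nonneg (hc k) (hF n k)) fun n =>
    Finset.single_le_sum (fun i _ => mul_nonneg (hc i) (hF n i)) (Finset.mem_univ k)

lemma summable_apply_of_summable_dotProduct (hF : ∀ n, 0 ≤ F n) (hc : 0 ≤ c)
    (h : Summable fun n => c ⬝ᵥ F n) {k : ι} (hk : c k ≠ 0) : Summable fun n => F n k :=
  (summable_mul_left_iff hk).mp (summable_mul_apply_of_summable_dotProduct hF hc h k)

lemma tsum_dotProduct_of_nonneg (hF : ∀ n, 0 ≤ F n) (hc : 0 ≤ c)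
    (h : Summable fun n => c ⬝ᵥ F n) : ∑' n, c ⬝ᵥ F n = c ⬝ᵥ fun k => ∑' n, F n k := by
  simp only [dotProduct]
  rw [Summable.tsum_finsetSum fun k _ => summable_mul_apply_of_summable_dotProduct hF hc h k]
  simp only [tsum_mul_left]

end Series

lemma Matrix.pow_succ_mulVec_apply {R : Type*} [Semiring R] [Fintype ι] [DecidableEq ι]
    (M : Matrix ι ι R) (v : ι → R) (n : ℕ) (j : ι) :
    (M ^ (n + 1) *ᵥ v) j = M j ⬝ᵥ (M ^ n *ᵥ v) := by
  rw [pow_succ', ← mulVec_mulVec]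
  rfl

section Potential

variable [Fintype ι] [DecidableEq ι] {M : Matrix ι ι ℝ} {v : ι → ℝ} {j : ι}

/-- Junk value `0` where the series diverges: `doobTransform` by the potential thereby cuts off
every state with a divergent series. -/
noncomputable def potential (M : Matrix ι ι ℝ) (v : ι → ℝ) : ι → ℝ :=
  fun j => ∑' n, (M ^ n *ᵥ v) j

lemma pow_mulVec_nonneg (hM : ∀ i j, 0 ≤ M i j) (hv : 0 ≤ v) (n : ℕ) : 0 ≤ M ^ n *ᵥ v :=
  fun j => dotProduct_nonneg_of_nonneg (fun k => pow_apply_nonneg hM n j k) hv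

lemma potential_nonneg (hM : ∀ i j, 0 ≤ M i j) (hv : 0 ≤ v) : 0 ≤ potential M v :=
  fun j => tsum_nonneg fun n => pow_mulVec_nonneg hM hv n j

lemma pow_mulVec_apply_le_potential (hM : ∀ i j, 0 ≤ M i j) (hv : 0 ≤ v)
    (hj : Summable fun n => (M ^ n *ᵥ v) j) (n : ℕ) : (M ^ n *ᵥ v) j ≤ potential M v j :=
  hj.le_tsum n fun k _ => pow_mulVec_nonneg hM hv k j

lemma summable_row_dotProduct_pow_mulVec (hj : Summable fun n => (M ^ n *ᵥ v) j) :
    Summable fun n => M j ⬝ᵥ (M ^ n *ᵥ v) := by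
  simpa only [M.pow_succ_mulVec_apply] using (summable_nat_add_iff 1).mpr hj

lemma potential_eq_add_mulVec (hM : ∀ i j, 0 ≤ M i j) (hv : 0 ≤ v)
    (hj : Summable fun n => (M ^ n *ᵥ v) j) :
    potential M v j = v j + (M *ᵥ potential M v) j := by
  calc potential M v j = (M ^ 0 *ᵥ v) j + ∑' n, (M ^ (n + 1) *ᵥ v) j := hj.tsum_eq_zero_add
    _ = v j + ∑' n, M j ⬝ᵥ (M ^ n *ᵥ v) := by simp only [pow_zero, one_mulVec,
        M.pow_succ_mulVec_apply]
    _ = v j + (M *ᵥ potential M v) j := by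
        rw [tsum_dotProduct_of_nonneg (pow_mulVec_nonneg hM hv) (fun k => hM j k)
          (summable_row_dotProduct_pow_mulVec hj)]
        rfl

lemma mulVec_potential_le (hM : ∀ i j, 0 ≤ M i j) (hv : 0 ≤ v) (hj : potential M v j ≠ 0) :
    (M *ᵥ potential M v) j ≤ potential M v j := by
  have hsum : Summable fun n => (M ^ n *ᵥ v) j := by
    by_contra h
    exact hj (tsum_eq_zero_of_not_summable h)
  have hvj : 0 ≤ v j := hv j
  linarith [potential_eq_add_mulVec hM hv hsum]

end Potential

section DoobTransform

variable {M : Matrix ι ι ℝ} {w : ι → ℝ}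

/-- Rows where `w` vanishes are zero, by the convention `x / 0 = 0`. -/
noncomputable def doobTransform (M : Matrix ι ι ℝ) (w : ι → ℝ) : Matrix ι ι ℝ :=
  of fun j k => M j k * w k / w j

def exitVector [Fintype ι] (T : Matrix ι ι ℝ) : ι → ℝ :=
  fun i => 1 - ∑ j, T i j

lemma doobTransform_nonneg (hM : ∀ i j, 0 ≤ M i j) (hw : 0 ≤ w) (j k : ι) :
    0 ≤ doobTransform M w j k :=
  div_nonneg (mul_nonneg (hM j k) (hw k)) (hw j)

lemma sum_doobTransform_row [Fintype ι] (j : ι) : ∑ k, doobTransform M w j k = (M *ᵥ w) j / w j :=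
  (Finset.sum_div _ _ _).symm

lemma sum_doobTransform_row_le_one [Fintype ι] (hw : 0 ≤ w) (hMw : ∀ j, w j ≠ 0 → (M *ᵥ w) j ≤ w j)
    (j : ι) : ∑ k, doobTransform M w j k ≤ 1 := by
  rw [sum_doobTransform_row]
  rcases (hw j).eq_or_lt with hj | hj
  · simp [← hj]
  · exact (div_le_one hj).mpr (hMw j hj.ne')

end DoobTransform

section Representation

variable [Fintype ι] [DecidableEq ι] {M : Matrix ι ι ℝ} {v : ι → ℝ}

lemma potential_mul_exitVector (hM : ∀ i j, 0 ≤ M i j) (hv : 0 ≤ v) {j : ι}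
    (hj : Summable fun n => (M ^ n *ᵥ v) j) :
    potential M v j * exitVector (doobTransform M (potential M v)) j = v j := by
  have hvw : v j ≤ potential M v j := by
    simpa using pow_mulVec_apply_le_potential hM hv hj 0
  rcases eq_or_ne (potential M v j) 0 with hw | hw
  · rw [hw, zero_mul]
    exact le_antisymm (hv j) (hw ▸ hvw)
  · rw [exitVector, sum_doobTransform_row, mul_sub, mul_div_cancel₀ _ hw,
      potential_eq_add_mulVec hM hv hj]
    ring

lemma potential_mul_doobTransform_pow_mulVec_exitVector (hM : ∀ i j, 0 ≤ M i j) (hv : 0 ≤ v)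
    (n : ℕ) {j : ι} (hj : Summable fun n => (M ^ n *ᵥ v) j) :
    potential M v j * (doobTransform M (potential M v) ^ n *ᵥ
      exitVector (doobTransform M (potential M v))) j = (M ^ n *ᵥ v) j := by
  set w := potential M v
  set T := doobTransform M w
  induction n generalizing j with
  | zero => simpa using potential_mul_exitVector hM hv hj
  | succ n ih =>
    rw [T.pow_succ_mulVec_apply, M.pow_succ_mulVec_apply]
    rcases eq_or_ne (w j) 0 with hw | hw
    · rw [hw, zero_mul, ← M.pow_succ_mulVec_apply]
      exact le_antisymm (pow_mulVec_nonneg hM hv (n + 1) j)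
        (hw ▸ pow_mulVec_apply_le_potential hM hv hj (n + 1))
    · simp only [dotProduct, Finset.mul_sum]
      refine Finset.sum_congr rfl fun k _ => ?_
      rcases eq_or_ne (M j k) 0 with hjk | hjk
      · simp [T, doobTransform, hjk]
      · have hk := summable_apply_of_summable_dotProduct (pow_mulVec_nonneg hM hv)
          (fun k => hM j k) (summable_row_dotProduct_pow_mulVec hj) hjk
        rw [← ih hk]
        simp only [T, doobTransform, of_apply]
        field_simp

lemma dotProduct_potential_mul_doobTransform_pow_mulVec_exitVector (hM : ∀ i j, 0 ≤ M i j)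
    (hv : 0 ≤ v) {c : ι → ℝ} (hc : 0 ≤ c) (hsum : Summable fun n => c ⬝ᵥ (M ^ n *ᵥ v))
    (n : ℕ) : c ⬝ᵥ (potential M v * (doobTransform M (potential M v) ^ n *ᵥ
      exitVector (doobTransform M (potential M v)))) = c ⬝ᵥ (M ^ n *ᵥ v) := by
  refine Finset.sum_congr rfl fun j _ => ?_
  rcases eq_or_ne (c j) 0 with hj | hj
  · simp [hj]
  · rw [Pi.mul_apply, potential_mul_doobTransform_pow_mulVec_exitVector hM hv n
      (summable_apply_of_summable_dotProduct (pow_mulVec_nonneg hM hv) hc hsum hj)]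

end Representation

lemma isProbDist_div_of_hasSum {a : ℕ → ℝ} {s : ℝ} (ha : ∀ n, 0 ≤ a n) (hs : HasSum a s)
    (hs0 : s ≠ 0) : IsProbDist fun n => a n / s :=
  ⟨fun n => div_nonneg (ha n) ((hs.nonneg ha)), by simpa [hs0] using hs.div_const s⟩

/-- A summable ℝ₊-rational sequence with positive sum, normalized to unit sum,
is a discrete PH distribution. -/
theorem normalized_rplus_rational_is_ph (a : ℕ → ℝ) (s : ℝ)
    (ha : IsRPlusRational a) (hs : HasSum a s) (hspos : 0 < s) :
    IsPH (fun n => a n / s) := by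
  obtain ⟨m, hm, M, u, v, hM, hu, hv, hav⟩ := ha
  obtain rfl : a = fun n => u ⬝ᵥ (M ^ n *ᵥ v) := funext hav
  set c := u ᵥ* M
  have hc : 0 ≤ c := fun j => dotProduct_nonneg_of_nonneg hu fun i => hM i j
  have ha_succ (n : ℕ) : u ⬝ᵥ (M ^ (n + 1) *ᵥ v) = c ⬝ᵥ (M ^ n *ᵥ v) := by
    rw [pow_succ', ← mulVec_mulVec, dotProduct_mulVec]
  have hsum : Summable fun n => c ⬝ᵥ (M ^ n *ᵥ v) := by
    simpa only [ha_succ] using (summable_nat_add_iff 1).mpr hs.summable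
  have hs_eq : s = u ⬝ᵥ v + c ⬝ᵥ potential M v := by
    rw [← hs.tsum_eq, hs.summable.tsum_eq_zero_add]
    simp only [pow_zero, one_mulVec, ha_succ]
    rw [tsum_dotProduct_of_nonneg (pow_mulVec_nonneg hM hv) hc hsum]
    rfl
  have hw := potential_nonneg hM hv
  have hα_sum : ∑ j, c j * potential M v j / s = 1 - u ⬝ᵥ v / s := by
    rw [← Finset.sum_div]
    change c ⬝ᵥ potential M v / s = _
    field_simp
    linarith
  refine ⟨isProbDist_div_of_hasSum (fun n => dotProduct_nonneg_of_nonneg hu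
      (pow_mulVec_nonneg hM hv n)) hs hspos.ne', m, hm, fun j => c j * potential M v j / s,
    doobTransform M (potential M v), fun j => div_nonneg (mul_nonneg (hc j) (hw j)) hspos.le,
    ?_, doobTransform_nonneg hM hw,
    sum_doobTransform_row_le_one hw fun j => mulVec_potential_le hM hv, by simp [hα_sum], ?_⟩
  · rw [hα_sum]
    linarith [div_nonneg (dotProduct_nonneg_of_nonneg hu hv) hspos.le]
  · rintro (_ | n) hn
    · omega
    change u ⬝ᵥ (M ^ (n + 1) *ᵥ v) / s =
      _ ⬝ᵥ (doobTransform M (potential M v) ^ n *ᵥ exitVector _)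
    rw [ha_succ, ← dotProduct_potential_mul_doobTransform_pow_mulVec_exitVector hM hv hc hsum n]
    simp only [dotProduct, Finset.sum_div, Pi.mul_apply]
    exact Finset.sum_congr rfl fun j _ => by ring
end

section
/- Let C be the smallest class of probability distributions on ℕ that contains all finitely supported probability distributions and is closed under mixtures (with parameters p ∈ (0,1)), convolutions, and geometric mixtures (with parameters p ∈ (0,1)). Then every discrete phase-type (PH) distribution on ℕ belongs to C. -/
open Matrix

/-- Convolution of two sequences on ℕ. -/
def conv (q₁ q₂ : ℕ → ℝ) (n : ℕ) : ℝ :=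
  ∑ k ∈ Finset.range (n + 1), q₁ k * q₂ (n - k)

/-- `k`-fold convolution power of `q`; `convPow q 0` is the point mass at `0`. -/
def convPow (q : ℕ → ℝ) : ℕ → ℕ → ℝ
  | 0 => fun n => if n = 0 then 1 else 0
  | k + 1 => conv q (convPow q k)

/-- Geometric mixture of `q` with parameter `p`. -/
noncomputable def geomMix (p : ℝ) (q : ℕ → ℝ) (n : ℕ) : ℝ :=
  ∑' k : ℕ, (1 - p) * p ^ k * convPow q k n

/-- The smallest class of probability distributions on ℕ containing all finitely
supported probability distributions and closed under mixtures, convolutions, and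
geometric mixtures (with parameters in `(0,1)`). -/
inductive GenClass : (ℕ → ℝ) → Prop
  | base (p : ℕ → ℝ) (hp : IsProbDist p) (hfin : ∃ N, ∀ n, N ≤ n → p n = 0) :
      GenClass p
  | mix (q₁ q₂ : ℕ → ℝ) (p : ℝ) (h₁ : GenClass q₁) (h₂ : GenClass q₂)
      (hp : p ∈ Set.Ioo (0 : ℝ) 1) :
      GenClass (fun n => p * q₁ n + (1 - p) * q₂ n)
  | conv (q₁ q₂ : ℕ → ℝ) (h₁ : GenClass q₁) (h₂ : GenClass q₂) :
      GenClass (conv q₁ q₂)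
  | geom (q : ℕ → ℝ) (p : ℝ) (hq : GenClass q) (hp : p ∈ Set.Ioo (0 : ℝ) 1) :
      GenClass (geomMix p q)

open PowerSeries

/-!
Work with generating functions in `ℝ⟦X⟧` and call `F` `c`-scaled when `F = c • mk q` for some
`q` in the class. Scaled series are closed under sums (mixtures), products (convolutions) and
`F ↦ (1 - F)⁻¹` for scale `c < 1`, because the geometric mixture `g` of `q` satisfies the renewal
equation `g = (1 - c) δ₀ + c q ∗ g`.

The generating functions `x i` of the absorption time of a PH chain started in state `i` solve
`x i = ∑ j, (T i j • X) * x j + t i • X`. Eliminating one state from such a system (Gaussian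
elimination with pivot `(1 - W 0 0)⁻¹`) gives a smaller system of the same shape whose rows still
have total mass at most `1`, so by induction every `x i` is scaled. Hence so is the generating
function of `p`, and total mass `1` forces the scale to be `1`.
-/

section ProbDist

variable {p q q₁ q₂ : ℕ → ℝ}

lemma IsProbDist.le_one (hp : IsProbDist p) (n : ℕ) : p n ≤ 1 :=
  le_hasSum hp.2 n fun j _ => hp.1 j

lemma isProbDist_pi_single (a : ℕ) : IsProbDist (Pi.single a 1) :=
  ⟨fun n => by by_cases h : n = a <;> simp [h], hasSum_pi_single a 1⟩

lemma isProbDist_mix {c : ℝ} (hc : c ∈ Set.Icc (0 : ℝ) 1) (h₁ : IsProbDist q₁)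
    (h₂ : IsProbDist q₂) : IsProbDist fun n => c * q₁ n + (1 - c) * q₂ n := by
  obtain ⟨hc0, hc1⟩ := hc
  refine ⟨fun n => ?_, by simpa using (h₁.2.mul_left c).add (h₂.2.mul_left (1 - c))⟩
  have := h₁.1 n; have := h₂.1 n
  have : 0 ≤ 1 - c := by linarith
  positivity

lemma isProbDist_conv (h₁ : IsProbDist q₁) (h₂ : IsProbDist q₂) : IsProbDist (conv q₁ q₂) := by
  refine ⟨fun n => Finset.sum_nonneg fun k _ => mul_nonneg (h₁.1 k) (h₂.1 (n - k)), ?_⟩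
  have hnorm : ∀ {q : ℕ → ℝ}, IsProbDist q → Summable fun n => ‖q n‖ := fun hq => by
    simpa [Real.norm_eq_abs, abs_of_nonneg (hq.1 _)] using hq.2.summable
  have := hasSum_sum_range_mul_of_summable_norm (hnorm h₁) (hnorm h₂)
  rwa [h₁.2.tsum_eq, h₂.2.tsum_eq, mul_one] at this

lemma isProbDist_convPow (hq : IsProbDist q) (k : ℕ) : IsProbDist (convPow q k) := by
  induction k with
  | zero => exact ⟨fun n => by simp only [convPow]; split <;> norm_num, hasSum_ite_eq 0 1⟩
  | succ k ih => exact isProbDist_conv hq ih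

variable {c : ℝ}

lemma summable_geomMix_term (hc0 : 0 ≤ c) (hc1 : c < 1) (hq : IsProbDist q) (n : ℕ) :
    Summable fun k => (1 - c) * c ^ k * convPow q k n :=
  ((summable_geometric_of_lt_one hc0 hc1).mul_left (1 - c)).of_nonneg_of_le
    (fun k => mul_nonneg (mul_nonneg (by linarith) (pow_nonneg hc0 k))
      ((isProbDist_convPow hq k).1 n))
    (fun k => mul_le_of_le_one_right (mul_nonneg (by linarith) (pow_nonneg hc0 k))
      ((isProbDist_convPow hq k).le_one n))

lemma isProbDist_geomMix (hc0 : 0 ≤ c) (hc1 : c < 1) (hq : IsProbDist q) :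
    IsProbDist (geomMix c q) := by
  set f : ℕ × ℕ → ℝ := fun kn => (1 - c) * c ^ kn.1 * convPow q kn.1 kn.2
  have hf0 : ∀ kn, 0 ≤ f kn := fun kn =>
    mul_nonneg (mul_nonneg (by linarith) (pow_nonneg hc0 _)) ((isProbDist_convPow hq kn.1).1 kn.2)
  have hrow (k : ℕ) : HasSum (fun n => f (k, n)) ((1 - c) * c ^ k) := by
    simpa using (isProbDist_convPow hq k).2.mul_left ((1 - c) * c ^ k)
  have hgeom : HasSum (fun k : ℕ => (1 - c) * c ^ k) 1 := by
    have := (hasSum_geometric_of_lt_one hc0 hc1).mul_left (1 - c)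
    rwa [mul_inv_cancel₀ (by linarith)] at this
  have hf : HasSum f 1 := by
    have hs : Summable f := (summable_prod_of_nonneg hf0).2
      ⟨fun k => (hrow k).summable, by simpa only [(hrow _).tsum_eq] using hgeom.summable⟩
    rw [hgeom.unique (hs.hasSum.prod_fiberwise hrow)]
    exact hs.hasSum
  refine ⟨fun n => tsum_nonneg fun k => hf0 (k, n), ?_⟩
  have hswap : HasSum (fun nk : ℕ × ℕ => f nk.swap) 1 :=
    (Equiv.prodComm ℕ ℕ).hasSum_iff.2 hf
  exact hswap.prod_fiberwise fun n => (summable_geomMix_term hc0 hc1 hq n).hasSum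

theorem GenClass.isProbDist (h : GenClass p) : IsProbDist p := by
  induction h with
  | base _ hp _ => exact hp
  | mix _ _ _ _ _ hc ih₁ ih₂ => exact isProbDist_mix (Set.Ioo_subset_Icc_self hc) ih₁ ih₂
  | conv _ _ _ _ ih₁ ih₂ => exact isProbDist_conv ih₁ ih₂
  | geom _ _ _ hc ih => exact isProbDist_geomMix hc.1.le hc.2 ih

lemma genClass_pi_single (a : ℕ) : GenClass (Pi.single a 1) :=
  .base _ (isProbDist_pi_single a) ⟨a + 1, fun n hn => Pi.single_eq_of_ne (by omega) 1⟩

end ProbDist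

lemma mk_conv (a b : ℕ → ℝ) : mk (conv a b) = mk a * mk b := by
  ext n
  simp [conv, coeff_mul, Finset.Nat.sum_antidiagonal_eq_sum_range_succ_mk]

lemma mk_pi_single {R : Type*} [Semiring R] (a : ℕ) : mk (Pi.single a (1 : R)) = X ^ a := by
  ext n
  simp [coeff_X_pow, Pi.single_apply]

lemma geomMix_eq_add_conv {c : ℝ} {q : ℕ → ℝ} (hc0 : 0 ≤ c) (hc1 : c < 1) (hq : IsProbDist q)
    (n : ℕ) : geomMix c q n = (1 - c) * convPow q 0 n + c * conv q (geomMix c q) n := by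
  have hstep (k : ℕ) : (1 - c) * c ^ (k + 1) * convPow q (k + 1) n =
      c * ∑ j ∈ Finset.range (n + 1), q j * ((1 - c) * c ^ k * convPow q k (n - j)) := by
    simp only [convPow, conv, Finset.mul_sum]
    exact Finset.sum_congr rfl fun j _ => by ring
  rw [geomMix, (summable_geomMix_term hc0 hc1 hq n).tsum_eq_zero_add, pow_zero, mul_one]
  simp only [hstep, tsum_mul_left]
  rw [Summable.tsum_finsetSum fun j _ => (summable_geomMix_term hc0 hc1 hq (n - j)).mul_left (q j)]
  simp only [tsum_mul_left, conv, geomMix]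

lemma mk_geomMix_mul {c : ℝ} {q : ℕ → ℝ} (hc0 : 0 ≤ c) (hc1 : c < 1) (hq : IsProbDist q) :
    mk (geomMix c q) * (1 - c • mk q) = (1 - c) • 1 := by
  have h : mk (geomMix c q) = (1 - c) • 1 + c • (mk q * mk (geomMix c q)) := by
    ext n
    simp [geomMix_eq_add_conv hc0 hc1 hq n, ← mk_conv, convPow, coeff_one, conv]
  simp only [smul_eq_C_mul] at h ⊢
  linear_combination h

def IsScaledGen (c : ℝ) (F : ℝ⟦X⟧) : Prop :=
  0 ≤ c ∧ ∃ q, GenClass q ∧ F = c • mk q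

namespace IsScaledGen

variable {a b c d : ℝ} {F G : ℝ⟦X⟧}

lemma nonneg (h : IsScaledGen c F) : 0 ≤ c := h.1

lemma zero : IsScaledGen 0 0 := ⟨le_rfl, _, genClass_pi_single 0, (zero_smul ℝ _).symm⟩

lemma eq_zero (h : IsScaledGen 0 F) : F = 0 := by
  obtain ⟨-, q, -, rfl⟩ := h
  exact zero_smul ℝ _

lemma X_pow (a : ℕ) : IsScaledGen 1 (X ^ a) :=
  ⟨zero_le_one, _, genClass_pi_single a, by rw [one_smul, mk_pi_single]⟩

lemma one : IsScaledGen 1 1 := by simpa using X_pow 0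

lemma smul (ha : 0 ≤ a) (h : IsScaledGen c F) : IsScaledGen (a * c) (a • F) := by
  obtain ⟨hc, q, hq, rfl⟩ := h
  exact ⟨mul_nonneg ha hc, q, hq, smul_smul a c _⟩

lemma add (hF : IsScaledGen a F) (hG : IsScaledGen b G) : IsScaledGen (a + b) (F + G) := by
  obtain ⟨ha, q₁, hq₁, rfl⟩ := hF
  obtain ⟨hb, q₂, hq₂, rfl⟩ := hG
  rcases ha.eq_or_lt with rfl | ha
  · rw [zero_smul, zero_add, zero_add]
    exact ⟨hb, q₂, hq₂, rfl⟩
  rcases hb.eq_or_lt with rfl | hb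
  · rw [zero_smul, add_zero, add_zero]
    exact ⟨ha.le, q₁, hq₁, rfl⟩
  have hab : 0 < a + b := by positivity
  refine ⟨hab.le, _, .mix q₁ q₂ (a / (a + b)) hq₁ hq₂
    ⟨by positivity, (div_lt_one hab).2 (by linarith)⟩, ?_⟩
  ext n
  simp only [map_add, coeff_smul, coeff_mk, smul_eq_mul]
  field_simp
  ring

lemma sum {ι : Type*} (s : Finset ι) {c : ι → ℝ} {F : ι → ℝ⟦X⟧}
    (h : ∀ i ∈ s, IsScaledGen (c i) (F i)) :
    IsScaledGen (∑ i ∈ s, c i) (∑ i ∈ s, F i) := by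
  induction s using Finset.cons_induction with
  | empty => simpa using zero
  | cons i s hi ih =>
    rw [Finset.sum_cons, Finset.sum_cons]
    exact (h i (Finset.mem_cons_self i s)).add (ih fun j hj => h j (Finset.mem_cons_of_mem hj))

lemma mul (hF : IsScaledGen a F) (hG : IsScaledGen b G) : IsScaledGen (a * b) (F * G) := by
  obtain ⟨ha, q₁, hq₁, rfl⟩ := hF
  obtain ⟨hb, q₂, hq₂, rfl⟩ := hG
  exact ⟨mul_nonneg ha hb, _, .conv q₁ q₂ hq₁ hq₂, by rw [mk_conv, smul_mul_smul_comm]⟩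

lemma inv_one_sub (hF : IsScaledGen c F) (hc : c < 1) : IsScaledGen (1 - c)⁻¹ (1 - F)⁻¹ := by
  obtain ⟨hc0, q, hq, rfl⟩ := hF
  rcases hc0.eq_or_lt with rfl | hc0
  · simpa using one
  have hq1 : c * q 0 < 1 :=
    (mul_le_of_le_one_right hc0.le (hq.isProbDist.le_one 0)).trans_lt hc
  have hunit : constantCoeff (1 - c • mk q) ≠ 0 := by simpa using (sub_pos.2 hq1).ne'
  refine ⟨inv_nonneg.2 (by linarith), _, .geom q c hq ⟨hc0, hc⟩, ?_⟩
  symm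
  rw [eq_inv_iff_mul_eq_one hunit, smul_mul_assoc,
    mk_geomMix_mul hc0.le hc hq.isProbDist, smul_smul, inv_mul_cancel₀ (by linarith), one_smul]

-- For `c = 1` the hypothesis forces `d = 0`, and then `d / (1 - c) = 0` as well.
lemma inv_one_sub_mul (hF : IsScaledGen c F) (hG : IsScaledGen d G) (hcd : c + d ≤ 1) :
    IsScaledGen (d / (1 - c)) ((1 - F)⁻¹ * G) := by
  rcases lt_or_ge c 1 with hc | hc
  · rw [div_eq_inv_mul]
    exact (hF.inv_one_sub hc).mul hG
  obtain rfl : d = 0 := by linarith [hG.nonneg]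
  simpa [hG.eq_zero] using zero

lemma genClass {p : ℕ → ℝ} (h : IsScaledGen c (mk p)) (hp : IsProbDist p) : GenClass p := by
  obtain ⟨-, q, hq, h⟩ := h
  have hpq : p = fun n => c * q n := funext fun n => by simpa using congrArg (coeff n) h
  have hc : c = 1 := by
    refine HasSum.unique ?_ hp.2
    simpa [hpq] using hq.isProbDist.2.mul_left c
  simpa [hpq, hc] using hq

end IsScaledGen

section Elimination

variable {R : Type*} [CommRing R] {m : ℕ} {W : Fin (m + 1) → Fin (m + 1) → R}
  {U x : Fin (m + 1) → R} {G : R}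

lemma eq_mul_sum_of_eq_sum_mul_add (hG : G * (1 - W 0 0) = 1)
    (hx : ∀ i, x i = ∑ j, W i j * x j + U i) :
    x 0 = G * (∑ j : Fin m, W 0 j.succ * x j.succ + U 0) := by
  have h := hx 0
  rw [Fin.sum_univ_succ] at h
  calc x 0 = G * ((1 - W 0 0) * x 0) := by rw [← mul_assoc, hG, one_mul]
    _ = _ := by congr 1; linear_combination h

lemma succ_eq_sum_mul_add_of_eq_sum_mul_add (hG : G * (1 - W 0 0) = 1)
    (hx : ∀ i, x i = ∑ j, W i j * x j + U i) (i : Fin m) :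
    x i.succ = ∑ j : Fin m, (W i.succ j.succ + W i.succ 0 * (G * W 0 j.succ)) * x j.succ +
      (U i.succ + W i.succ 0 * (G * U 0)) := by
  rw [hx i.succ, Fin.sum_univ_succ, eq_mul_sum_of_eq_sum_mul_add hG hx]
  simp only [add_mul, Finset.sum_add_distrib, mul_add, Finset.mul_sum]
  ring_nf

end Elimination

/-- `W i j` and `U i` are the generating functions of the defective times to jump from `i` to `j`
and to be absorbed from `i`, with masses `cW i j` and `cU i`. -/
structure IsSubstochasticSystem {m : ℕ} (W : Fin m → Fin m → ℝ⟦X⟧) (U : Fin m → ℝ⟦X⟧)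
    (cW : Fin m → Fin m → ℝ) (cU : Fin m → ℝ) : Prop where
  isScaledGen_W : ∀ i j, IsScaledGen (cW i j) (W i j)
  constantCoeff_W : ∀ i j, constantCoeff (W i j) = 0
  isScaledGen_U : ∀ i, IsScaledGen (cU i) (U i)
  sum_le_one : ∀ i, ∑ j, cW i j + cU i ≤ 1

namespace IsSubstochasticSystem

section Pivot

variable {m : ℕ} {W : Fin (m + 1) → Fin (m + 1) → ℝ⟦X⟧} {U : Fin (m + 1) → ℝ⟦X⟧}
  {cW : Fin (m + 1) → Fin (m + 1) → ℝ} {cU : Fin (m + 1) → ℝ}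

lemma pivot_add_le (h : IsSubstochasticSystem W U cW cU) :
    cW 0 0 + (∑ j : Fin m, cW 0 j.succ + cU 0) ≤ 1 := by
  have := h.sum_le_one 0
  rw [Fin.sum_univ_succ] at this
  linarith

lemma pivot_sum_nonneg (h : IsSubstochasticSystem W U cW cU) :
    0 ≤ ∑ j : Fin m, cW 0 j.succ + cU 0 :=
  add_nonneg (Finset.sum_nonneg fun j _ => (h.isScaledGen_W 0 j.succ).nonneg)
    (h.isScaledGen_U 0).nonneg

lemma pivot_add_W_le (h : IsSubstochasticSystem W U cW cU) (j : Fin m) :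
    cW 0 0 + cW 0 j.succ ≤ 1 := by
  have := Finset.single_le_sum (fun k _ => (h.isScaledGen_W 0 (Fin.succ k)).nonneg)
    (Finset.mem_univ j)
  linarith [h.pivot_add_le, (h.isScaledGen_U 0).nonneg]

lemma pivot_add_U_le (h : IsSubstochasticSystem W U cW cU) : cW 0 0 + cU 0 ≤ 1 := by
  have := Finset.sum_nonneg fun j (_ : j ∈ Finset.univ) => (h.isScaledGen_W 0 (Fin.succ j)).nonneg
  linarith [h.pivot_add_le]

lemma eliminate (h : IsSubstochasticSystem W U cW cU) : IsSubstochasticSystem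
    (fun i j => W i.succ j.succ + W i.succ 0 * ((1 - W 0 0)⁻¹ * W 0 j.succ))
    (fun i => U i.succ + W i.succ 0 * ((1 - W 0 0)⁻¹ * U 0))
    (fun i j => cW i.succ j.succ + cW i.succ 0 * (cW 0 j.succ / (1 - cW 0 0)))
    (fun i => cU i.succ + cW i.succ 0 * (cU 0 / (1 - cW 0 0))) where
  isScaledGen_W i j := (h.isScaledGen_W _ _).add <| (h.isScaledGen_W _ _).mul <|
    (h.isScaledGen_W 0 0).inv_one_sub_mul (h.isScaledGen_W _ _) (h.pivot_add_W_le j)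
  constantCoeff_W i j := by simp [h.constantCoeff_W]
  isScaledGen_U i := (h.isScaledGen_U _).add <| (h.isScaledGen_W _ _).mul <|
    (h.isScaledGen_W 0 0).inv_one_sub_mul (h.isScaledGen_U _) h.pivot_add_U_le
  sum_le_one i := by
    have hrow := h.sum_le_one i.succ
    rw [Fin.sum_univ_succ] at hrow
    have hpivot : (∑ j : Fin m, cW 0 j.succ + cU 0) / (1 - cW 0 0) ≤ 1 :=
      div_le_one_of_le₀ (by linarith [h.pivot_add_le])
        (by linarith [h.pivot_add_le, h.pivot_sum_nonneg])
    calc ∑ j : Fin m, (cW i.succ j.succ + cW i.succ 0 * (cW 0 j.succ / (1 - cW 0 0))) +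
          (cU i.succ + cW i.succ 0 * (cU 0 / (1 - cW 0 0)))
        = ∑ j : Fin m, cW i.succ j.succ + cU i.succ +
          cW i.succ 0 * ((∑ j : Fin m, cW 0 j.succ + cU 0) / (1 - cW 0 0)) := by
          rw [Finset.sum_add_distrib, ← Finset.mul_sum, ← Finset.sum_div, add_div]
          ring
      _ ≤ ∑ j : Fin m, cW i.succ j.succ + cU i.succ + cW i.succ 0 * 1 := by
          gcongr
          exact (h.isScaledGen_W _ _).nonneg
      _ ≤ 1 := by linarith

end Pivot

theorem exists_isScaledGen {m : ℕ} {W : Fin m → Fin m → ℝ⟦X⟧} {U : Fin m → ℝ⟦X⟧}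
    {cW : Fin m → Fin m → ℝ} {cU : Fin m → ℝ} (h : IsSubstochasticSystem W U cW cU)
    {x : Fin m → ℝ⟦X⟧} (hx : ∀ i, x i = ∑ j, W i j * x j + U i) (i : Fin m) :
    ∃ c ≤ 1, IsScaledGen c (x i) := by
  induction m with
  | zero => exact i.elim0
  | succ m ih =>
    have hG : (1 - W 0 0)⁻¹ * (1 - W 0 0) = 1 :=
      PowerSeries.inv_mul_cancel _ (by simp [h.constantCoeff_W])
    have hsucc (i : Fin m) : ∃ c ≤ 1, IsScaledGen c (x i.succ) :=
      ih h.eliminate (succ_eq_sum_mul_add_of_eq_sum_mul_add hG hx) i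
    refine Fin.cases ?_ hsucc i
    choose c hc1 hc using hsucc
    have hR : IsScaledGen (∑ j, cW 0 j.succ * c j + cU 0)
        (∑ j : Fin m, W 0 j.succ * x j.succ + U 0) :=
      (IsScaledGen.sum _ fun j _ => (h.isScaledGen_W 0 j.succ).mul (hc j)).add (h.isScaledGen_U 0)
    have hle : ∑ j, cW 0 j.succ * c j + cU 0 ≤ ∑ j : Fin m, cW 0 j.succ + cU 0 := by
      gcongr with j
      exact mul_le_of_le_one_right (h.isScaledGen_W _ _).nonneg (hc1 j)
    refine ⟨(∑ j, cW 0 j.succ * c j + cU 0) / (1 - cW 0 0),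
      div_le_one_of_le₀ (by linarith [h.pivot_add_le]) (by linarith [h.pivot_add_le, hR.nonneg]),
      ?_⟩
    rw [eq_mul_sum_of_eq_sum_mul_add hG hx]
    exact (h.isScaledGen_W 0 0).inv_one_sub_mul hR (by linarith [h.pivot_add_le])

end IsSubstochasticSystem

section PhaseType

variable {R : Type*} [CommRing R] {ι : Type*} [Fintype ι] [DecidableEq ι]
  (T : Matrix ι ι R) (t : ι → R)

lemma X_mul_mk_pow_mulVec_eq (i : ι) :
    X * mk (fun n => (T ^ n *ᵥ t) i) =
      ∑ j, (T i j • X) * (X * mk fun n => (T ^ n *ᵥ t) j) + t i • X := by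
  ext (_ | _ | n)
  · simp
  · simp [coeff_X]
  · rw [coeff_succ_X_mul, coeff_mk, pow_succ', ← mulVec_mulVec]
    simp [coeff_X, mulVec, dotProduct]

lemma mk_eq_of_pow_mulVec {α : ι → R} {p : ℕ → R} (hp0 : p 0 = 1 - ∑ i, α i)
    (hpn : ∀ n, 1 ≤ n → p n = α ⬝ᵥ (T ^ (n - 1)) *ᵥ t) :
    mk p = (1 - ∑ i, α i) • 1 + ∑ i, α i • (X * mk fun n => (T ^ n *ᵥ t) i) := by
  ext (_ | n)
  · simp [hp0]
  · simp [hpn, dotProduct]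

end PhaseType

/-- Every discrete PH distribution on ℕ can be generated from finitely supported
distributions by mixtures, convolutions, and geometric mixtures. -/
theorem ph_mem_genClass (p : ℕ → ℝ) (hp : IsPH p) : GenClass p := by
  obtain ⟨hp, m, -, α, T, hα, hα1, hT, hTrow, hp0, hpn⟩ := hp
  set t : Fin m → ℝ := fun i => 1 - ∑ j, T i j
  have hsys : IsSubstochasticSystem (fun i j => T i j • X) (fun i => t i • X) T t :=
    { isScaledGen_W := fun i j => by simpa using (IsScaledGen.X_pow 1).smul (hT i j)
      constantCoeff_W := fun i j => by simp
      isScaledGen_U := fun i => by simpa using (IsScaledGen.X_pow 1).smul (sub_nonneg.2 (hTrow i))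
      sum_le_one := fun i => by simp [t] }
  choose c _ hc using hsys.exists_isScaledGen (X_mul_mk_pow_mulVec_eq T t)
  have hmk := (IsScaledGen.one.smul (sub_nonneg.2 hα1)).add
    (IsScaledGen.sum Finset.univ fun i _ => (hc i).smul (hα i))
  rw [← mk_eq_of_pow_mulVec T t hp0 hpn] at hmk
  exact hmk.genClass hp
end

section
/- The class of discrete phase-type (PH) distributions on ℕ is closed under convolution: if q₁ and q₂ are discrete PH distributions, then their convolution n ↦ ∑_{k=0}^{n} q₁ k · q₂ (n−k) is a discrete PH distribution. -/
open Matrix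

/-!
If `X₁` is the absorption time of a chain `(α₁, T₁)` and `X₂` that of `(α₂, T₂)`, then `X₁ + X₂`
is the absorption time of the chain on the disjoint union of the phases that runs the first chain
and, at the step where it would be absorbed, instead enters a phase of the second chain drawn from
`α₂` (being absorbed right away with probability `q₂ 0 = 1 - ∑ α₂`). With probability
`q₁ 0 = 1 - ∑ α₁` the first chain is skipped altogether. So the convolution is represented by the
initial vector `(α₁, q₁ 0 • α₂)` and the block upper triangular matrix `[[T₁, t₁ α₂ᵀ], [0, T₂]]`,
`t₁` being the exit vector of `T₁`; by induction on `n`, the first block of `Tⁿ t` is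
`∑ₖ q₂ (n - k) • T₁ᵏ t₁`.
-/

open Finset

theorem IsProbDist.conv {q₁ q₂ : ℕ → ℝ} (h₁ : IsProbDist q₁) (h₂ : IsProbDist q₂) :
    IsProbDist (conv q₁ q₂) := by
  refine ⟨fun n => sum_nonneg fun k _ => mul_nonneg (h₁.1 k) (h₂.1 (n - k)), ?_⟩
  have := hasSum_sum_range_mul_of_summable_norm h₁.2.summable.norm h₂.2.summable.norm
  rwa [h₁.2.tsum_eq, h₂.2.tsum_eq, mul_one] at this

section Representation

variable {ι κ : Type*} [Fintype ι] [Fintype κ]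

def exitVec (T : Matrix ι ι ℝ) (i : ι) : ℝ := 1 - ∑ j, T i j

theorem exitVec_nonneg_iff {T : Matrix ι ι ℝ} {i : ι} : 0 ≤ exitVec T i ↔ ∑ j, T i j ≤ 1 :=
  sub_nonneg

variable [DecidableEq ι] [DecidableEq κ]

structure IsPHRep (p : ℕ → ℝ) (α : ι → ℝ) (T : Matrix ι ι ℝ) : Prop where
  initial_nonneg : ∀ i, 0 ≤ α i
  sum_initial_le_one : ∑ i, α i ≤ 1
  transition_nonneg : ∀ i j, 0 ≤ T i j
  rowSum_le_one : ∀ i, ∑ j, T i j ≤ 1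
  apply_zero : p 0 = 1 - ∑ i, α i
  apply_succ : ∀ n, p (n + 1) = α ⬝ᵥ (T ^ n) *ᵥ exitVec T

theorem IsPHRep.reindex {p : ℕ → ℝ} {α : ι → ℝ} {T : Matrix ι ι ℝ} (h : IsPHRep p α T)
    (e : ι ≃ κ) : IsPHRep p (α ∘ e.symm) (Matrix.reindex e e T) := by
  have hexit : exitVec (Matrix.reindex e e T) = exitVec T ∘ e.symm := by
    funext i
    simp only [exitVec, reindex_apply, submatrix_apply, Function.comp_apply]
    rw [e.symm.sum_comp (T (e.symm i))]
  have hpow (n : ℕ) : Matrix.reindex e e T ^ n = Matrix.reindex e e (T ^ n) := by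
    simpa using (map_pow (reindexAlgEquiv ℝ ℝ e) T n).symm
  refine ⟨fun i => h.initial_nonneg _, ?_, fun i j => h.transition_nonneg _ _,
    fun i => exitVec_nonneg_iff.1 ?_, ?_, fun n => ?_⟩
  · simpa only [Function.comp_apply, e.symm.sum_comp] using h.sum_initial_le_one
  · rw [hexit]; exact exitVec_nonneg_iff.2 (h.rowSum_le_one (e.symm i))
  · simpa only [Function.comp_apply, e.symm.sum_comp] using h.apply_zero
  · rw [h.apply_succ, hpow, hexit, reindex_apply, submatrix_mulVec_equiv,
      comp_equiv_symm_dotProduct]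
    simp [Function.comp_assoc]

theorem isPH_iff_exists_isPHRep {p : ℕ → ℝ} :
    IsPH p ↔ IsProbDist p ∧ ∃ m, 1 ≤ m ∧ ∃ (α : Fin m → ℝ) (T : Matrix (Fin m) (Fin m) ℝ),
      IsPHRep p α T := by
  refine and_congr_right fun _ => exists_congr fun m => and_congr_right fun _ =>
    exists_congr fun α => exists_congr fun T => ⟨fun h => ?_, fun h => ?_⟩
  · obtain ⟨hα, hsum, hT, hrow, h0, hsucc⟩ := h
    exact ⟨hα, hsum, hT, hrow, h0, fun n => hsucc (n + 1) n.succ_pos⟩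
  · refine ⟨h.initial_nonneg, h.sum_initial_le_one, h.transition_nonneg, h.rowSum_le_one,
      h.apply_zero, fun n hn => ?_⟩
    obtain ⟨k, rfl⟩ := Nat.exists_eq_add_of_le' hn
    exact h.apply_succ k

theorem IsPHRep.isPH [Nonempty ι] {p : ℕ → ℝ} {α : ι → ℝ} {T : Matrix ι ι ℝ}
    (hp : IsProbDist p) (h : IsPHRep p α T) : IsPH p :=
  isPH_iff_exists_isPHRep.2
    ⟨hp, Fintype.card ι, Fintype.card_pos, _, _, h.reindex (Fintype.equivFin ι)⟩

end Representation

section Convolution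

variable {ι κ : Type*} [Fintype ι] [Fintype κ]

def convInitial (α₁ : ι → ℝ) (α₂ : κ → ℝ) : ι ⊕ κ → ℝ :=
  Sum.elim α₁ ((1 - ∑ i, α₁ i) • α₂)

def convTransition (T₁ : Matrix ι ι ℝ) (α₂ : κ → ℝ) (T₂ : Matrix κ κ ℝ) :
    Matrix (ι ⊕ κ) (ι ⊕ κ) ℝ :=
  fromBlocks T₁ (vecMulVec (exitVec T₁) α₂) 0 T₂

theorem exitVec_convTransition (T₁ : Matrix ι ι ℝ) (α₂ : κ → ℝ) (T₂ : Matrix κ κ ℝ) :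
    exitVec (convTransition T₁ α₂ T₂) =
      Sum.elim ((1 - ∑ j, α₂ j) • exitVec T₁) (exitVec T₂) := by
  funext i
  rcases i with i | i
  · simp [exitVec, convTransition, Fintype.sum_sum_type, vecMulVec_apply, ← mul_sum]
    ring
  · simp [exitVec, convTransition, Fintype.sum_sum_type]

theorem one_sub_sum_convInitial (α₁ : ι → ℝ) (α₂ : κ → ℝ) :
    1 - ∑ i, convInitial α₁ α₂ i = (1 - ∑ i, α₁ i) * (1 - ∑ j, α₂ j) := by
  simp only [convInitial, Fintype.sum_sum_type, Sum.elim_inl, Sum.elim_inr, Pi.smul_apply,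
    smul_eq_mul, ← mul_sum]
  ring

variable [DecidableEq ι] [DecidableEq κ]

theorem convTransition_pow_mulVec_exitVec {q₂ : ℕ → ℝ} {α₂ : κ → ℝ} {T₂ : Matrix κ κ ℝ}
    (h₂ : IsPHRep q₂ α₂ T₂) (T₁ : Matrix ι ι ℝ) (n : ℕ) :
    convTransition T₁ α₂ T₂ ^ n *ᵥ exitVec (convTransition T₁ α₂ T₂) =
      Sum.elim (∑ k ∈ range (n + 1), q₂ (n - k) • (T₁ ^ k *ᵥ exitVec T₁))
        (T₂ ^ n *ᵥ exitVec T₂) := by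
  induction n with
  | zero => simp [exitVec_convTransition, h₂.apply_zero]
  | succ n ih =>
    rw [pow_succ', ← mulVec_mulVec, ih, convTransition, fromBlocks_mulVec, Sum.elim_comp_inl,
      Sum.elim_comp_inr, zero_mulVec, zero_add, mulVec_mulVec _ T₂, ← pow_succ']
    congr 1
    rw [sum_range_succ' _ (n + 1), vecMulVec_mulVec, ← h₂.apply_succ, mulVec_sum,
      op_smul_eq_smul]
    simp [mulVec_smul, mulVec_mulVec, ← pow_succ']

theorem IsPHRep.conv {q₁ q₂ : ℕ → ℝ} {α₁ : ι → ℝ} {T₁ : Matrix ι ι ℝ} {α₂ : κ → ℝ}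
    {T₂ : Matrix κ κ ℝ} (h₁ : IsPHRep q₁ α₁ T₁) (h₂ : IsPHRep q₂ α₂ T₂) :
    IsPHRep (conv q₁ q₂) (convInitial α₁ α₂) (convTransition T₁ α₂ T₂) := by
  have hq₁ : 0 ≤ 1 - ∑ i, α₁ i := sub_nonneg.2 h₁.sum_initial_le_one
  have hq₂ : 0 ≤ 1 - ∑ j, α₂ j := sub_nonneg.2 h₂.sum_initial_le_one
  have hexit₁ (i : ι) : 0 ≤ exitVec T₁ i := exitVec_nonneg_iff.2 (h₁.rowSum_le_one i)
  refine ⟨?_, ?_, ?_, ?_, ?_, fun n => ?_⟩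
  · rintro (i | j)
    · exact h₁.initial_nonneg i
    · exact mul_nonneg hq₁ (h₂.initial_nonneg j)
  · rw [← sub_nonneg, one_sub_sum_convInitial]
    exact mul_nonneg hq₁ hq₂
  · rintro (i | i) (j | j)
    · exact h₁.transition_nonneg i j
    · exact mul_nonneg (hexit₁ i) (h₂.initial_nonneg j)
    · exact le_rfl
    · exact h₂.transition_nonneg i j
  · intro i
    rw [← exitVec_nonneg_iff, exitVec_convTransition]
    rcases i with i | i
    · exact mul_nonneg hq₂ (hexit₁ i)
    · exact exitVec_nonneg_iff.2 (h₂.rowSum_le_one i)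
  · rw [one_sub_sum_convInitial, ← h₁.apply_zero, ← h₂.apply_zero]
    simp [_root_.conv]
  · rw [convTransition_pow_mulVec_exitVec h₂, convInitial, sumElim_dotProduct_sumElim,
      dotProduct_sum, smul_dotProduct, ← h₂.apply_succ, ← h₁.apply_zero, _root_.conv,
      sum_range_succ']
    simp [dotProduct_smul, ← h₁.apply_succ, mul_comm]

end Convolution

/-- The class of discrete PH distributions is closed under convolution. -/
theorem ph_closed_under_convolution (q₁ q₂ : ℕ → ℝ)
    (h₁ : IsPH q₁) (h₂ : IsPH q₂) :
    IsPH (conv q₁ q₂) := by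
  obtain ⟨hp₁, m₁, hm₁, α₁, T₁, hT₁⟩ := isPH_iff_exists_isPHRep.1 h₁
  obtain ⟨hp₂, _, -, α₂, T₂, hT₂⟩ := isPH_iff_exists_isPHRep.1 h₂
  have : Nonempty (Fin m₁) := ⟨⟨0, hm₁⟩⟩
  exact (hT₁.conv hT₂).isPH (hp₁.conv hp₂)
end

section
/- For ℝ-rational sequences, singly nested star operations suffice: let D₀ ⊆ ℝ[[z]] be the set of polynomials (power series with finitely many nonzero coefficients), and let D₁ be the smallest subset of ℝ[[z]] containing D₀ together with all series (1 − f)⁻¹ for f ∈ D₀ with constant coefficient f(0) ≠ 1, and closed under addition and multiplication of power series. Then for every ℝ-rational sequence a : ℕ → ℝ (i.e., a n = uᵀ Mⁿ v for some m ≥ 1, real m×m matrix M, and real vectors u, v ∈ ℝ^m), the generating function ∑ₙ a n · zⁿ belongs to D₁. -/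
open Matrix PowerSeries

/-- `f ∈ ℝ[[z]]` has finitely many nonzero coefficients (i.e., is a polynomial). -/
def IsPolyPS (f : PowerSeries ℝ) : Prop :=
  ∃ N, ∀ n, N ≤ n → PowerSeries.coeff n f = 0

/-- `D₁`: the smallest subset of ℝ[[z]] containing the polynomials together with
all series `(1 - f)⁻¹` for polynomial `f` with constant coefficient `≠ 1`, and
closed under addition and multiplication. -/
inductive D1 : PowerSeries ℝ → Prop
  | poly (f : PowerSeries ℝ) (hf : IsPolyPS f) : D1 f
  | star (f : PowerSeries ℝ) (hf : IsPolyPS f)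
      (h1 : PowerSeries.constantCoeff f ≠ 1) : D1 (1 - f)⁻¹
  | add (f g : PowerSeries ℝ) (hf : D1 f) (hg : D1 g) : D1 (f + g)
  | mul (f g : PowerSeries ℝ) (hf : D1 f) (hg : D1 g) : D1 (f * g)

/-- `a` is an ℝ-rational sequence. -/
def IsRRational (a : ℕ → ℝ) : Prop :=
  ∃ m : ℕ, 1 ≤ m ∧
    ∃ (M : Matrix (Fin m) (Fin m) ℝ) (u v : Fin m → ℝ),
      ∀ n, a n = u ⬝ᵥ (M ^ n).mulVec v

/-!
The generating matrix `G = ∑ Mⁿ zⁿ` satisfies `(1 - zM) G = 1`, so Cramer's rule gives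
`det (1 - zM) • G = adj (1 - zM)`. Hence `∑ (uᵀ Mⁿ v) zⁿ = p · q⁻¹` with polynomials `p` and
`q = det (1 - zM)`, the reversed characteristic polynomial, whose constant coefficient is `1`;
and `q⁻¹ = (1 - (1 - q))⁻¹` is a single star of a polynomial.
-/

open scoped Polynomial

lemma isPolyPS_coe (p : ℝ[X]) : IsPolyPS p :=
  ⟨p.natDegree + 1, fun _ hn => by
    rw [Polynomial.coeff_coe]; exact p.coeff_eq_zero_of_natDegree_lt (by omega)⟩

lemma D1.coe_mul_inv_coe (p q : ℝ[X]) (hq : q.coeff 0 ≠ 0) : D1 (p * (q : ℝ⟦X⟧)⁻¹) := by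
  have hstar := D1.star (1 - q) (by simpa using isPolyPS_coe (1 - q)) (by simpa using hq)
  rw [sub_sub_cancel] at hstar
  exact D1.mul _ _ (D1.poly _ (isPolyPS_coe p)) hstar

namespace Matrix

variable {R n : Type*} [CommRing R] [DecidableEq n]

noncomputable def charmatrixRev (M : Matrix n n R) : Matrix n n R[X] :=
  1 - (Polynomial.X : R[X]) • M.map Polynomial.C

lemma map_coe_charmatrixRev (M : Matrix n n R) :
    M.charmatrixRev.map Polynomial.coeToPowerSeries.ringHom =
      1 - (PowerSeries.X : R⟦X⟧) • M.map PowerSeries.C := by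
  ext i j : 1
  by_cases h : i = j <;> simp [charmatrixRev, h] <;> ring

variable [Fintype n]

lemma coeff_charpolyRev_zero (M : Matrix n n R) : M.charpolyRev.coeff 0 = 1 := by
  rw [Polynomial.coeff_zero_eq_eval_zero, eval_charpolyRev]

noncomputable def powGenFun (M : Matrix n n R) : Matrix n n R⟦X⟧ :=
  of fun i j => PowerSeries.mk fun k => (M ^ k) i j

lemma one_sub_X_smul_mul_powGenFun (M : Matrix n n R) :
    (1 - (PowerSeries.X : R⟦X⟧) • M.map PowerSeries.C) * M.powGenFun = 1 := by
  rw [sub_mul, one_mul, sub_eq_iff_eq_add, smul_mul_assoc]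
  ext i j (_ | k)
  · simp [powGenFun, one_apply, mul_apply]
  · simp [powGenFun, one_apply, mul_apply, apply_ite (PowerSeries.coeff (k + 1)), pow_succ',
      PowerSeries.coeff_succ_X_mul, PowerSeries.coeff_C_mul]

lemma dotProduct_powGenFun_mulVec (M : Matrix n n R) (u v : n → R) :
    (PowerSeries.C ∘ u) ⬝ᵥ M.powGenFun *ᵥ (PowerSeries.C ∘ v) =
      PowerSeries.mk fun k => u ⬝ᵥ (M ^ k) *ᵥ v := by
  ext k
  simp [dotProduct, mulVec, powGenFun, map_sum, PowerSeries.coeff_C_mul, Finset.mul_sum]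

lemma charpolyRev_smul_powGenFun (M : Matrix n n R) :
    (M.charpolyRev : R⟦X⟧) • M.powGenFun =
      M.charmatrixRev.adjugate.map Polynomial.coeToPowerSeries.ringHom := by
  set A := M.charmatrixRev.map Polynomial.coeToPowerSeries.ringHom with hA_def
  have hA : A * M.powGenFun = 1 := by
    rw [hA_def, map_coe_charmatrixRev]; exact M.one_sub_X_smul_mul_powGenFun
  have hdet : A.det = M.charpolyRev := (RingHom.map_det _ _).symm
  have hadj : A.adjugate = M.charmatrixRev.adjugate.map Polynomial.coeToPowerSeries.ringHom :=
    (RingHom.map_adjugate _ _).symm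
  calc (M.charpolyRev : R⟦X⟧) • M.powGenFun = (A.adjugate * A) * M.powGenFun := by
        rw [adjugate_mul, smul_mul, one_mul, hdet]
    _ = _ := by rw [Matrix.mul_assoc, hA, mul_one, hadj]

lemma mk_dotProduct_pow_mulVec_mul_charpolyRev (M : Matrix n n R) (u v : n → R) :
    (PowerSeries.mk fun k => u ⬝ᵥ (M ^ k) *ᵥ v) * M.charpolyRev =
      ((Polynomial.C ∘ u) ⬝ᵥ M.charmatrixRev.adjugate *ᵥ (Polynomial.C ∘ v) : R[X]) := by
  have hC (w : n → R) :
      Polynomial.coeToPowerSeries.ringHom ∘ Polynomial.C ∘ w = PowerSeries.C ∘ w :=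
    funext fun _ => by simp
  rw [← dotProduct_powGenFun_mulVec, mul_comm, ← smul_eq_mul, ← dotProduct_smul, ← smul_mulVec,
    charpolyRev_smul_powGenFun, ← Polynomial.coeToPowerSeries.ringHom_apply, RingHom.map_dotProduct,
    hC]
  congr 1
  ext i : 1
  rw [Function.comp_apply, RingHom.map_mulVec, hC]

lemma mk_dotProduct_pow_mulVec_eq_mul_inv {k : Type*} [Field k] (M : Matrix n n k)
    (u v : n → k) :
    (PowerSeries.mk fun i => u ⬝ᵥ (M ^ i) *ᵥ v) =
      ((Polynomial.C ∘ u) ⬝ᵥ M.charmatrixRev.adjugate *ᵥ (Polynomial.C ∘ v) : k[X]) *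
        (M.charpolyRev : k⟦X⟧)⁻¹ :=
  (PowerSeries.eq_mul_inv_iff_mul_eq (by simp [coeff_charpolyRev_zero])).2
    (M.mk_dotProduct_pow_mulVec_mul_charpolyRev u v)

end Matrix

/-- For ℝ-rational sequences, singly nested star operations suffice: the
generating function of any ℝ-rational sequence lies in `D₁`. -/
theorem rational_genfun_mem_D1 (a : ℕ → ℝ) (ha : IsRRational a) :
    D1 (PowerSeries.mk a) := by
  obtain ⟨m, -, M, u, v, hav⟩ := ha
  rw [funext hav, M.mk_dotProduct_pow_mulVec_eq_mul_inv]
  exact D1.coe_mul_inv_coe _ _ (by simp [M.coeff_charpolyRev_zero])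
end
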